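/- Let N ≥ 1, let Ω ⊂ ℝ^N be a nonempty bounded open set, let k ∈ ℝ, and let n, ñ ∈ ℂ. Let w : ℝ^N → ℂ be twice continuously differentiable with support a compact subset of Ω, and let v : ℝ^N → ℂ be twice continuously differentiable, such that Δv(x) + k² ñ² v(x) = 0 for all x ∈ Ω and Δw(x) + k² n² w(x) = v(x) for all x ∈ Ω. Then ∫_Ω |v(x)|² dx = k² (n² − conj(ñ)²) ∫_Ω conj(v(x)) · w(x) dx. -/

import Mathlib

open MeasureTheory

/-- The Laplacian of a function `u : ℝ^N → ℂ`, defined as the sum of the second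
partial derivatives along the standard coordinate directions. -/
noncomputable def laplacian {N : ℕ} (u : EuclideanSpace ℝ (Fin N) → ℂ)
    (x : EuclideanSpace ℝ (Fin N)) : ℂ :=
  ∑ j : Fin N,
    fderiv ℝ (fun y => fderiv ℝ u y (EuclideanSpace.single j 1)) x (EuclideanSpace.single j 1)

/-!
Multiply `Δw + k²n²w = v` by `conj v` and integrate over `Ω`. Since `w` is compactly supported
in `Ω`, the integral may be taken over all of `ℝ^N`, where Green's identity
`∫ f Δw = ∫ (Δf) w` holds without boundary terms (two integrations by parts per coordinate).
Conjugating the equation for `v` gives `Δ(conj v) = -k² conj(ñ)² conj v` on `Ω`, and off `Ω`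
the factor `w` vanishes.
-/

section DirectionalDerivative

variable {E F : Type*} [NormedAddCommGroup E] [NormedSpace ℝ E] [NormedAddCommGroup F]
  [NormedSpace ℝ F] {f : E → F}

theorem ContDiff.continuous_fderiv_apply_const {n : WithTop ℕ∞} (hf : ContDiff ℝ n f)
    (hn : n ≠ 0) (v : E) : Continuous (fderiv ℝ f · v) :=
  (hf.continuous_fderiv hn).clm_apply continuous_const

theorem ContDiff.fderiv_apply_const {m n : WithTop ℕ∞} (hf : ContDiff ℝ n f) (hmn : m + 1 ≤ n)
    (v : E) : ContDiff ℝ m (fderiv ℝ f · v) :=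
  (hf.fderiv_right hmn).clm_apply contDiff_const

end DirectionalDerivative

section IntegrationByParts

variable {E 𝕜 : Type*} [NormedAddCommGroup E] [NormedSpace ℝ E] [FiniteDimensional ℝ E]
  [MeasurableSpace E] [BorelSpace E] {μ : Measure E} [μ.IsAddHaarMeasure]
  [NormedField 𝕜] [NormedAlgebra ℝ 𝕜] {f g : E → 𝕜}

theorem integral_mul_fderiv_eq_neg_fderiv_mul_of_hasCompactSupport (hf : ContDiff ℝ 1 f)
    (hg : ContDiff ℝ 1 g) (hgs : HasCompactSupport g) (v : E) :
    ∫ x, f x * fderiv ℝ g x v ∂μ = -∫ x, fderiv ℝ f x v * g x ∂μ :=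
  integral_mul_fderiv_eq_neg_fderiv_mul_of_integrable
    (((hf.continuous_fderiv_apply_const one_ne_zero v).mul hg.continuous
      ).integrable_of_hasCompactSupport hgs.mul_left)
    ((hf.continuous.mul (hg.continuous_fderiv_apply_const one_ne_zero v)
      ).integrable_of_hasCompactSupport (hgs.fderiv_apply ℝ v).mul_left)
    ((hf.continuous.mul hg.continuous).integrable_of_hasCompactSupport hgs.mul_left)
    (fun x _ => hf.differentiable one_ne_zero x) (fun x _ => hg.differentiable one_ne_zero x)

theorem integral_mul_fderiv_fderiv_eq_of_hasCompactSupport (hf : ContDiff ℝ 2 f)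
    (hg : ContDiff ℝ 2 g) (hgs : HasCompactSupport g) (v : E) :
    ∫ x, f x * fderiv ℝ (fderiv ℝ g · v) x v ∂μ
      = ∫ x, fderiv ℝ (fderiv ℝ f · v) x v * g x ∂μ := by
  rw [integral_mul_fderiv_eq_neg_fderiv_mul_of_hasCompactSupport (hf.of_le one_le_two)
      (hg.fderiv_apply_const le_rfl v) (hgs.fderiv_apply ℝ v),
    integral_mul_fderiv_eq_neg_fderiv_mul_of_hasCompactSupport (hf.fderiv_apply_const le_rfl v)
      (hg.of_le one_le_two) hgs, neg_neg]

end IntegrationByParts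

section Laplacian

variable {N : ℕ} {u f g : EuclideanSpace ℝ (Fin N) → ℂ}

theorem laplacian_eq_zero_of_notMem_tsupport {x : EuclideanSpace ℝ (Fin N)}
    (hx : x ∉ tsupport u) : laplacian u x = 0 :=
  Finset.sum_eq_zero fun j _ => by
    rw [fderiv_of_notMem_tsupport ℝ fun h => hx (tsupport_fderiv_apply_subset ℝ _ h),
      zero_apply]

theorem support_laplacian_subset : Function.support (laplacian u) ⊆ tsupport u :=
  fun _ hx => by_contra fun h => hx (laplacian_eq_zero_of_notMem_tsupport h)

theorem ContDiff.continuous_laplacian (hu : ContDiff ℝ 2 u) : Continuous (laplacian u) :=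
  continuous_finsetSum _ fun _ _ =>
    (hu.fderiv_apply_const le_rfl _).continuous_fderiv_apply_const one_ne_zero _

theorem laplacian_comp_continuousLinearEquiv (L : ℂ ≃L[ℝ] ℂ) (x : EuclideanSpace ℝ (Fin N)) :
    laplacian (L ∘ u) x = L (laplacian u x) := by
  have h (v) : (fderiv ℝ (L ∘ u) · v) = L ∘ (fderiv ℝ u · v) := funext fun y => by
    simp [L.comp_fderiv]
  simp only [laplacian, map_sum, h]
  simp [L.comp_fderiv]

theorem laplacian_conj (x : EuclideanSpace ℝ (Fin N)) :
    laplacian (fun y => (starRingEnd ℂ) (u y)) x = (starRingEnd ℂ) (laplacian u x) :=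
  laplacian_comp_continuousLinearEquiv Complex.conjCLE x

variable {μ : Measure (EuclideanSpace ℝ (Fin N))} [μ.IsAddHaarMeasure]

theorem integral_mul_laplacian_eq (hf : ContDiff ℝ 2 f) (hg : ContDiff ℝ 2 g)
    (hgs : HasCompactSupport g) :
    ∫ x, f x * laplacian g x ∂μ = ∫ x, laplacian f x * g x ∂μ := by
  have hfΔg (v) : Integrable (fun x => f x * fderiv ℝ (fderiv ℝ g · v) x v) μ :=
    (hf.continuous.mul ((hg.fderiv_apply_const le_rfl v).continuous_fderiv_apply_const
      one_ne_zero v)).integrable_of_hasCompactSupport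
      ((hgs.fderiv_apply ℝ v).fderiv_apply ℝ v).mul_left
  have hΔfg (v) : Integrable (fun x => fderiv ℝ (fderiv ℝ f · v) x v * g x) μ :=
    (((hf.fderiv_apply_const le_rfl v).continuous_fderiv_apply_const one_ne_zero v).mul
      hg.continuous).integrable_of_hasCompactSupport hgs.mul_left
  simp only [laplacian, Finset.mul_sum, Finset.sum_mul]
  rw [integral_finsetSum _ fun j _ => hfΔg _, integral_finsetSum _ fun j _ => hΔfg _]
  exact Finset.sum_congr rfl fun j _ =>
    integral_mul_fderiv_fderiv_eq_of_hasCompactSupport hf hg hgs _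

theorem integral_mul_helmholtz_eq (hf : ContDiff ℝ 2 f) (hg : ContDiff ℝ 2 g)
    (hgs : HasCompactSupport g) (c : ℂ) :
    ∫ x, f x * (laplacian g x + c * g x) ∂μ = ∫ x, (laplacian f x + c * f x) * g x ∂μ := by
  have hfΔg : Integrable (fun x => f x * laplacian g x) μ :=
    (hf.continuous.mul hg.continuous_laplacian).integrable_of_hasCompactSupport
      (hgs.mono' support_laplacian_subset).mul_left
  have hΔfg : Integrable (fun x => laplacian f x * g x) μ :=
    (hf.continuous_laplacian.mul hg.continuous).integrable_of_hasCompactSupport hgs.mul_left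
  have hfg : Integrable (fun x => c * (f x * g x)) μ :=
    ((hf.continuous.mul hg.continuous).integrable_of_hasCompactSupport hgs.mul_left).const_mul c
  simp only [mul_add, add_mul, mul_left_comm (f _), mul_assoc]
  rw [integral_add hfΔg hfg, integral_add hΔfg hfg, integral_mul_laplacian_eq hf hg hgs]

end Laplacian

theorem transmission_integral_identity_general {N : ℕ}
    (Ω : Set (EuclideanSpace ℝ (Fin N)))
    (hΩopen : IsOpen Ω)
    (k : ℝ) (n ntilde : ℂ)
    (w v : EuclideanSpace ℝ (Fin N) → ℂ)
    (hw : ContDiff ℝ 2 w) (hwsupp : HasCompactSupport w) (hwΩ : tsupport w ⊆ Ω)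
    (hv : ContDiff ℝ 2 v)
    (hveq : ∀ x ∈ Ω, laplacian v x + (k : ℂ) ^ 2 * ntilde ^ 2 * v x = 0)
    (hweq : ∀ x ∈ Ω, laplacian w x + (k : ℂ) ^ 2 * n ^ 2 * w x = v x) :
    ((∫ x in Ω, ‖v x‖ ^ 2 : ℝ) : ℂ)
      = (k : ℂ) ^ 2 * (n ^ 2 - (starRingEnd ℂ ntilde) ^ 2)
        * ∫ x in Ω, (starRingEnd ℂ) (v x) * w x := by
  have hw_off {x} (hx : x ∉ Ω) : w x = 0 ∧ laplacian w x = 0 :=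
    ⟨image_eq_zero_of_notMem_tsupport (hx <| hwΩ ·),
      laplacian_eq_zero_of_notMem_tsupport (hx <| hwΩ ·)⟩
  calc ((∫ x in Ω, ‖v x‖ ^ 2 : ℝ) : ℂ)
      = ∫ x in Ω, starRingEnd ℂ (v x) * v x := by
        rw [← integral_complex_ofReal]
        simp only [Complex.ofReal_pow, mul_comm (starRingEnd ℂ _), Complex.mul_conj']
    _ = ∫ x in Ω, starRingEnd ℂ (v x) * (laplacian w x + (k : ℂ) ^ 2 * n ^ 2 * w x) :=
        setIntegral_congr_fun hΩopen.measurableSet fun x hx => by rw [hweq x hx]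
    _ = ∫ x, starRingEnd ℂ (v x) * (laplacian w x + (k : ℂ) ^ 2 * n ^ 2 * w x) :=
        setIntegral_eq_integral_of_forall_compl_eq_zero fun x hx => by
          simp [hw_off hx]
    _ = ∫ x, (laplacian (fun y => starRingEnd ℂ (v y)) x
          + (k : ℂ) ^ 2 * n ^ 2 * starRingEnd ℂ (v x)) * w x :=
        integral_mul_helmholtz_eq (Complex.conjCLE.contDiff.comp hv) hw hwsupp _
    _ = ∫ x, (k : ℂ) ^ 2 * (n ^ 2 - starRingEnd ℂ ntilde ^ 2) * (starRingEnd ℂ (v x) * w x) := by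
        refine integral_congr_ae (.of_forall fun x => ?_)
        by_cases hx : x ∈ Ω
        · have hconj := congrArg (starRingEnd ℂ) (hveq x hx)
          simp only [map_add, map_mul, map_pow, Complex.conj_ofReal, map_zero] at hconj
          simp only [laplacian_conj]
          linear_combination w x * hconj
        · simp [hw_off hx]
    _ = _ := by
        rw [integral_const_mul, setIntegral_eq_integral_of_forall_compl_eq_zero fun x hx => by
          simp [hw_off hx]]

/-- The transmission integral identity (3.5)–(3.8): if `Δv + k² ntilde² v = 0` on `Ω` and
`Δw + k² n² w = v` on `Ω`, with `w` of class `C²` compactly supported in `Ω` and `v`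
of class `C²`, then `∫_Ω |v|² = k² (n² − conj(ntilde)²) ∫_Ω conj(v) · w`. -/
theorem transmission_integral_identity {N : ℕ} (hN : 1 ≤ N)
    (Ω : Set (EuclideanSpace ℝ (Fin N))) (hΩne : Ω.Nonempty)
    (hΩopen : IsOpen Ω) (hΩbdd : Bornology.IsBounded Ω)
    (k : ℝ) (n ntilde : ℂ)
    (w v : EuclideanSpace ℝ (Fin N) → ℂ)
    (hw : ContDiff ℝ 2 w) (hwsupp : HasCompactSupport w) (hwΩ : tsupport w ⊆ Ω)
    (hv : ContDiff ℝ 2 v)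
    (hveq : ∀ x ∈ Ω, laplacian v x + (k : ℂ) ^ 2 * ntilde ^ 2 * v x = 0)
    (hweq : ∀ x ∈ Ω, laplacian w x + (k : ℂ) ^ 2 * n ^ 2 * w x = v x) :
    ((∫ x in Ω, ‖v x‖ ^ 2 : ℝ) : ℂ)
      = (k : ℂ) ^ 2 * (n ^ 2 - (starRingEnd ℂ ntilde) ^ 2)
        * ∫ x in Ω, (starRingEnd ℂ) (v x) * w x :=
  transmission_integral_identity_general Ω hΩopen k n ntilde w v hw hwsupp hwΩ hv hveq hweq
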